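/- Let $(\alpha_n)$ be a sequence of positive reals with $\alpha_n \in (c,c')$, let $d_n = \inf_{k\geq 1}\prod_{j=k}^{k+n-1}\alpha_j$, and let $\alpha > 0$. Then $\sum_{n=1}^\infty (d_n)^{-\alpha} < \infty$ if and only if $\lim_{n\to\infty}(d_n)^{-1/n} < 1$. -/

import Mathlib

/-! Fekete's lemma applied to the subadditive sequence `-log d_n` shows that `d_n^{-1/n}`
converges to its infimum `L`. If `∑ d_n^{-a}` converges then some `d_n` exceeds `1`, which forces
`L < 1`; conversely, if `L < 1` then `d_n^{-a}` is eventually dominated by a convergent geometric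
series (the root test). -/

open Filter Finset

/-- `beta α k n = α_k ⋯ α_{k+n-1}`. -/
noncomputable def beta (α : ℕ → ℝ) (k n : ℕ) : ℝ := ∏ j ∈ Finset.range n, α (k + j)

/-- `d_n = inf_k β_k^n`. -/
noncomputable def dseq (α : ℕ → ℝ) (n : ℕ) : ℝ := ⨅ k, beta α k n

open Topology

section Products

variable {α : ℕ → ℝ}

theorem beta_add (k m n : ℕ) : beta α k (m + n) = beta α k m * beta α (k + m) n := by
  simp only [beta, prod_range_add, add_assoc]

theorem pow_le_beta {c : ℝ} (hc : 0 ≤ c) (hα : ∀ n, c ≤ α n) (k n : ℕ) : c ^ n ≤ beta α k n := by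
  simpa [beta] using prod_le_prod (s := range n) (fun _ _ => hc) fun j _ => hα (k + j)

theorem beta_le_pow {c' : ℝ} (h0 : ∀ n, 0 ≤ α n) (hα : ∀ n, α n ≤ c') (k n : ℕ) :
    beta α k n ≤ c' ^ n := by
  simpa [beta] using prod_le_prod (s := range n) (fun j _ => h0 (k + j)) fun j _ => hα (k + j)

theorem beta_nonneg (h0 : ∀ n, 0 ≤ α n) (k n : ℕ) : 0 ≤ beta α k n :=
  prod_nonneg fun j _ => h0 (k + j)

theorem bddBelow_range_beta (h0 : ∀ n, 0 ≤ α n) (n : ℕ) :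
    BddBelow (Set.range fun k => beta α k n) :=
  ⟨0, by rintro _ ⟨k, rfl⟩; exact beta_nonneg h0 k n⟩

theorem dseq_nonneg (h0 : ∀ n, 0 ≤ α n) (n : ℕ) : 0 ≤ dseq α n :=
  le_ciInf fun k => beta_nonneg h0 k n

theorem pow_le_dseq {c : ℝ} (hc : 0 ≤ c) (hα : ∀ n, c ≤ α n) (n : ℕ) : c ^ n ≤ dseq α n :=
  le_ciInf fun k => pow_le_beta hc hα k n

theorem dseq_le_pow {c' : ℝ} (h0 : ∀ n, 0 ≤ α n) (hα : ∀ n, α n ≤ c') (n : ℕ) :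
    dseq α n ≤ c' ^ n :=
  (ciInf_le (bddBelow_range_beta h0 n) 0).trans (beta_le_pow h0 hα 0 n)

theorem dseq_mul_le_dseq_add (h0 : ∀ n, 0 ≤ α n) (m n : ℕ) :
    dseq α m * dseq α n ≤ dseq α (m + n) := by
  refine le_ciInf fun k => ?_
  rw [beta_add]
  exact mul_le_mul (ciInf_le (bddBelow_range_beta h0 m) k)
    (ciInf_le (bddBelow_range_beta h0 n) (k + m)) (dseq_nonneg h0 n) (beta_nonneg h0 k m)

end Products

theorem exists_tendsto_inv_rpow_inv_of_supermultiplicative {d : ℕ → ℝ} {C : ℝ}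
    (hd : ∀ n, 0 < d n) (hmul : ∀ m n, d m * d n ≤ d (m + n)) (hC : ∀ n, d n ≤ C ^ n) :
    ∃ L, Tendsto (fun n : ℕ => (d n)⁻¹ ^ (n : ℝ)⁻¹) atTop (𝓝 L) ∧
      ∀ n ≠ 0, L ≤ (d n)⁻¹ ^ (n : ℝ)⁻¹ := by
  set u : ℕ → ℝ := fun n => -Real.log (d n)
  have hu : Subadditive u := fun m n => by
    have := Real.log_le_log (mul_pos (hd m) (hd n)) (hmul m n)
    rw [Real.log_mul (hd m).ne' (hd n).ne'] at this
    simp only [u]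
    linarith
  have hbdd : BddBelow (Set.range fun n => u n / n) := by
    refine ⟨min 0 (-Real.log C), ?_⟩
    rintro _ ⟨n, rfl⟩
    rcases Nat.eq_zero_or_pos n with rfl | hn
    · simp
    · have hlog : Real.log (d n) ≤ n * Real.log C :=
        (Real.log_le_log (hd n) (hC n)).trans_eq (Real.log_pow C n)
      refine (min_le_right _ _).trans ?_
      rw [le_div_iff₀ (by exact_mod_cast hn)]
      simp only [u]
      linarith
  have hexp : ∀ n : ℕ, (d n)⁻¹ ^ (n : ℝ)⁻¹ = Real.exp (u n / n) := fun n => by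
    rw [Real.rpow_def_of_pos (inv_pos.mpr (hd n)), Real.log_inv, div_eq_mul_inv]
  simp only [hexp]
  exact ⟨Real.exp hu.lim, (Real.continuous_exp.tendsto _).comp (hu.tendsto_lim hbdd),
    fun n hn => Real.exp_le_exp.mpr (hu.lim_le_div hbdd hn)⟩

theorem summable_rpow_of_tendsto_rpow_inv_lt_one {b : ℕ → ℝ} {L a : ℝ} (hb : ∀ n, 0 ≤ b n)
    (hL : L < 1) (h : Tendsto (fun n : ℕ => b n ^ (n : ℝ)⁻¹) atTop (𝓝 L)) (ha : 0 < a) :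
    Summable fun n => b n ^ a := by
  obtain ⟨r, hLr, hr1⟩ := exists_between hL
  have hr0 : 0 ≤ r := (ge_of_tendsto' h fun n => Real.rpow_nonneg (hb n) _).trans hLr.le
  refine Summable.of_norm_bounded_eventually_nat
    (summable_geometric_of_lt_one (Real.rpow_nonneg hr0 a) (Real.rpow_lt_one hr0 hr1 ha)) ?_
  filter_upwards [h.eventually_le_const hLr, eventually_ne_atTop 0] with n hn hn0
  have hbn : b n ≤ r ^ n := by
    simpa [Real.rpow_inv_natCast_pow (hb n) hn0] using
      pow_le_pow_left₀ (Real.rpow_nonneg (hb n) _) hn n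
  rw [Real.norm_of_nonneg (Real.rpow_nonneg (hb n) a), Real.rpow_pow_comm hr0]
  exact Real.rpow_le_rpow (hb n) hbn ha.le

theorem stmt3_general (c c' : ℝ) (α : ℕ → ℝ) (hc : 0 < c)
    (hα : ∀ n, α n ∈ Set.Ioo c c') (a : ℝ) (ha : 0 < a) :
    (Summable fun n => (dseq α (n + 1))⁻¹ ^ a) ↔
      ∃ L < (1 : ℝ), Filter.Tendsto
        (fun n : ℕ => (dseq α n)⁻¹ ^ ((n : ℝ)⁻¹)) Filter.atTop (nhds L) := by
  have h0 : ∀ n, 0 ≤ α n := fun n => hc.le.trans (hα n).1.le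
  have hd : ∀ n, 0 < dseq α n := fun n =>
    (pow_pos hc n).trans_le (pow_le_dseq hc.le (fun n => (hα n).1.le) n)
  obtain ⟨L, hL, hLle⟩ := exists_tendsto_inv_rpow_inv_of_supermultiplicative hd
    (dseq_mul_le_dseq_add h0) (dseq_le_pow h0 fun n => (hα n).2.le)
  constructor
  · intro hsum
    obtain ⟨n, hn⟩ := (hsum.tendsto_atTop_zero.eventually (gt_mem_nhds one_pos)).exists
    have hinv : (dseq α (n + 1))⁻¹ < 1 := by
      by_contra! hge
      exact (Real.one_le_rpow hge ha.le).not_gt hn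
    exact ⟨L, (hLle (n + 1) n.succ_ne_zero).trans_lt
      (Real.rpow_lt_one (inv_pos.mpr (hd _)).le hinv (by positivity)), hL⟩
  · rintro ⟨L', hL'1, hL'⟩
    exact (summable_nat_add_iff 1).mpr
      (summable_rpow_of_tendsto_rpow_inv_lt_one (fun n => (inv_pos.mpr (hd n)).le) hL'1 hL' ha)

theorem stmt3 (c c' : ℝ) (α : ℕ → ℝ) (hc : 0 < c) (hcc : c < c')
    (hα : ∀ n, α n ∈ Set.Ioo c c') (a : ℝ) (ha : 0 < a) :
    (Summable fun n => (dseq α (n + 1))⁻¹ ^ a) ↔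
      ∃ L < (1 : ℝ), Filter.Tendsto
        (fun n : ℕ => (dseq α n)⁻¹ ^ ((n : ℝ)⁻¹)) Filter.atTop (nhds L) :=
  stmt3_general c c' α hc hα a ha
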